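/- arXiv:1811.09379 — 2 statements merged into one kernel-verified Lean document; each statement's English description precedes it below -/
import Mathlib

section
/- Let v, w be bounded real sequences possessing continuous asymptotic distribution functions. Then v and w are independent if and only if they are statistically independent. -/
open Filter MeasureTheory Topology

/-- The average of the first `N` terms of a sequence. -/
noncomputable def seqAvg (v : ℕ → ℝ) (N : ℕ) : ℝ := (∑ n ∈ Finset.range N, v n) / N

/-- `v` has mean value `E`. -/
def HasMeanValue (v : ℕ → ℝ) (E : ℝ) : Prop := Tendsto (seqAvg v) atTop (nhds E)

/-- The number of elements of `A` among `0, ..., N-1`, as a real number. -/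
noncomputable def countBelow (A : Set ℕ) (N : ℕ) : ℝ :=
  ∑ n ∈ Finset.range N, Set.indicator A (fun _ => (1 : ℝ)) n

/-- `A ⊆ ℕ` has asymptotic density `d`. -/
def HasDensity (A : Set ℕ) (d : ℝ) : Prop :=
  Tendsto (fun N : ℕ => countBelow A N / N) atTop (nhds d)

/-- The upper asymptotic density of `A`. -/
noncomputable def upperDensity (A : Set ℕ) : ℝ :=
  Filter.limsup (fun N : ℕ => countBelow A N / N) atTop

/-- `F` is the asymptotic distribution function of the sequence `v`. -/
def HasADF (v : ℕ → ℝ) (F : ℝ → ℝ) : Prop := ∀ x : ℝ, HasDensity {n | v n < x} (F x)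

/-- Two bounded sequences are statistically independent: for every closed interval containing
the values of both and all functions continuous on it, the correlation of averages vanishes. -/
def StatIndep (v w : ℕ → ℝ) : Prop :=
  ∀ a b : ℝ, (∀ n, v n ∈ Set.Icc a b) → (∀ n, w n ∈ Set.Icc a b) →
    ∀ g g₁ : ℝ → ℝ, ContinuousOn g (Set.Icc a b) → ContinuousOn g₁ (Set.Icc a b) →
      Tendsto (fun N => seqAvg (fun n => g (v n)) N * seqAvg (fun n => g₁ (w n)) N -
        seqAvg (fun n => g (v n) * g₁ (w n)) N) atTop (nhds 0)

/-- Two subsets of ℕ are independent: both have asymptotic density, their intersection has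
asymptotic density, and the density of the intersection is the product of the densities. -/
def IndepDensitySets (S T : Set ℕ) : Prop :=
  ∃ dS dT dST : ℝ, HasDensity S dS ∧ HasDensity T dT ∧
    HasDensity (S ∩ T) dST ∧ dST = dS * dT

/-- Two sequences are independent: for arbitrary intervals `I, I₁` the preimage sets
are independent. -/
def IndepSeq (v w : ℕ → ℝ) : Prop :=
  ∀ I I₁ : Set ℝ, I.OrdConnected → I₁.OrdConnected →
    IndepDensitySets {n | v n ∈ I} {n | w n ∈ I₁}

private lemma div_le_div_of_nonneg_right' {a b c : ℝ} (h : a ≤ b) (hc : 0 ≤ c) :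
    a / c ≤ b / c := by
  rcases eq_or_lt_of_le hc with rfl | hc
  · simp
  · exact div_le_div_of_nonneg_right h hc.le

noncomputable abbrev ind (S : Set ℕ) : ℕ → ℝ := Set.indicator S (fun _ => 1)

lemma ind_of_mem {S : Set ℕ} {n : ℕ} (h : n ∈ S) : ind S n = 1 := Set.indicator_of_mem h _

lemma ind_of_not_mem {S : Set ℕ} {n : ℕ} (h : n ∉ S) : ind S n = 0 :=
  Set.indicator_of_notMem h _

lemma ind_nonneg (S : Set ℕ) (n : ℕ) : 0 ≤ ind S n := by
  by_cases h : n ∈ S <;> simp [ind_of_mem, ind_of_not_mem, h]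

lemma ind_le_one (S : Set ℕ) (n : ℕ) : ind S n ≤ 1 := by
  by_cases h : n ∈ S <;> simp [ind_of_mem, ind_of_not_mem, h]

lemma ind_mono {S T : Set ℕ} (h : S ⊆ T) (n : ℕ) : ind S n ≤ ind T n := by
  by_cases hn : n ∈ S
  · rw [ind_of_mem hn, ind_of_mem (h hn)]
  · rw [ind_of_not_mem hn]; exact ind_nonneg T n

lemma ind_inter (S T : Set ℕ) (n : ℕ) : ind (S ∩ T) n = ind S n * ind T n := by
  by_cases h1 : n ∈ S <;> by_cases h2 : n ∈ T <;>
    simp [ind_of_mem, ind_of_not_mem, h1, h2, Set.mem_inter_iff, *]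

lemma hasDensity_iff_hmv (S : Set ℕ) (d : ℝ) :
    HasDensity S d ↔ HasMeanValue (ind S) d := Iff.rfl

lemma seqAvg_add (u u' : ℕ → ℝ) (N : ℕ) :
    seqAvg (fun n => u n + u' n) N = seqAvg u N + seqAvg u' N := by
  simp [seqAvg, Finset.sum_add_distrib, add_div]

lemma seqAvg_sub (u u' : ℕ → ℝ) (N : ℕ) :
    seqAvg (fun n => u n - u' n) N = seqAvg u N - seqAvg u' N := by
  simp [seqAvg, Finset.sum_sub_distrib, sub_div]

lemma seqAvg_const_mul (c : ℝ) (u : ℕ → ℝ) (N : ℕ) :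
    seqAvg (fun n => c * u n) N = c * seqAvg u N := by
  simp [seqAvg, ← Finset.mul_sum, mul_div_assoc]

lemma seqAvg_mono {u u' : ℕ → ℝ} (h : ∀ n, u n ≤ u' n) (N : ℕ) :
    seqAvg u N ≤ seqAvg u' N := by
  unfold seqAvg
  exact div_le_div_of_nonneg_right' (Finset.sum_le_sum fun n _ => h n) (Nat.cast_nonneg N)

lemma seqAvg_nonneg {u : ℕ → ℝ} (h : ∀ n, 0 ≤ u n) (N : ℕ) : 0 ≤ seqAvg u N := by
  apply div_nonneg (Finset.sum_nonneg fun n _ => h n) (Nat.cast_nonneg N)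

lemma seqAvg_abs_le {u : ℕ → ℝ} {M : ℝ} (h : ∀ n, |u n| ≤ M) (N : ℕ) :
    |seqAvg u N| ≤ M := by
  have hM : 0 ≤ M := le_trans (abs_nonneg _) (h 0)
  rcases Nat.eq_zero_or_pos N with rfl | hN
  · simp [seqAvg, hM]
  · unfold seqAvg
    rw [abs_div, abs_of_nonneg (by positivity : (0:ℝ) ≤ (N:ℝ))]
    rw [div_le_iff₀ (by positivity)]
    calc |∑ n ∈ Finset.range N, u n| ≤ ∑ n ∈ Finset.range N, |u n| :=
          Finset.abs_sum_le_sum_abs _ _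
      _ ≤ ∑ n ∈ Finset.range N, M := Finset.sum_le_sum fun n _ => h n
      _ = M * N := by simp [mul_comm]

lemma seqAvg_sum {ι : Type*} (s : Finset ι) (u : ι → ℕ → ℝ) (N : ℕ) :
    seqAvg (fun n => ∑ i ∈ s, u i n) N = ∑ i ∈ s, seqAvg (u i) N := by
  rw [seqAvg, Finset.sum_comm, Finset.sum_div]
  rfl

lemma hmv_one : HasMeanValue (fun _ => (1:ℝ)) 1 := by
  have h : ∀ᶠ N in atTop, (1:ℝ) = seqAvg (fun _ => (1:ℝ)) N := by
    filter_upwards [eventually_gt_atTop 0] with N hN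
    have hN' : (N:ℝ) ≠ 0 := by positivity
    rw [seqAvg]
    rw [Finset.sum_const, Finset.card_range, nsmul_eq_mul, mul_one, div_self hN']
  exact Tendsto.congr' h tendsto_const_nhds

lemma hmv_add {u u' : ℕ → ℝ} {L L' : ℝ} (h : HasMeanValue u L)
    (h' : HasMeanValue u' L') : HasMeanValue (fun n => u n + u' n) (L + L') := by
  have := Tendsto.add h h'
  have e : (seqAvg fun n => u n + u' n) = fun N => seqAvg u N + seqAvg u' N :=
    funext fun N => seqAvg_add u u' N
  rw [HasMeanValue, e]; exact this

lemma hmv_sub {u u' : ℕ → ℝ} {L L' : ℝ} (h : HasMeanValue u L)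
    (h' : HasMeanValue u' L') : HasMeanValue (fun n => u n - u' n) (L - L') := by
  have := Tendsto.sub h h'
  have e : (seqAvg fun n => u n - u' n) = fun N => seqAvg u N - seqAvg u' N :=
    funext fun N => seqAvg_sub u u' N
  rw [HasMeanValue, e]; exact this

lemma hmv_const_mul {u : ℕ → ℝ} {L : ℝ} (c : ℝ) (h : HasMeanValue u L) :
    HasMeanValue (fun n => c * u n) (c * L) := by
  have := Tendsto.const_mul c h
  have e : (seqAvg fun n => c * u n) = fun N => c * seqAvg u N :=
    funext fun N => seqAvg_const_mul c u N
  rw [HasMeanValue, e]; exact this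

lemma hmv_congr {u u' : ℕ → ℝ} {L : ℝ} (h : HasMeanValue u L)
    (he : ∀ n, u n = u' n) : HasMeanValue u' L := by
  have : u = u' := funext he
  rwa [← this]

lemma hmv_unique {u : ℕ → ℝ} {L L' : ℝ} (h : HasMeanValue u L)
    (h' : HasMeanValue u L') : L = L' := tendsto_nhds_unique h h'

lemma hmv_finset_sum {ι : Type*} (s : Finset ι) (u : ι → ℕ → ℝ) (L : ι → ℝ)
    (h : ∀ i ∈ s, HasMeanValue (u i) (L i)) :
    HasMeanValue (fun n => ∑ i ∈ s, u i n) (∑ i ∈ s, L i) := by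
  have h2 : Tendsto (fun N => ∑ i ∈ s, seqAvg (u i) N) atTop (nhds (∑ i ∈ s, L i)) :=
    tendsto_finset_sum s h
  have e : (seqAvg fun n => ∑ i ∈ s, u i n) = fun N => ∑ i ∈ s, seqAvg (u i) N :=
    funext fun N => seqAvg_sum s u N
  rw [HasMeanValue, e]; exact h2

lemma hmv_squeeze {u u' u'' : ℕ → ℝ} {L : ℝ} (h1 : ∀ n, u n ≤ u' n) (h2 : ∀ n, u' n ≤ u'' n)
    (hu : HasMeanValue u L) (hu'' : HasMeanValue u'' L) : HasMeanValue u' L :=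
  tendsto_of_tendsto_of_tendsto_of_le_of_le hu hu''
    (fun N => seqAvg_mono h1 N) (fun N => seqAvg_mono h2 N)

lemma hmv_nonneg {u : ℕ → ℝ} {L : ℝ} (h : ∀ n, 0 ≤ u n) (hu : HasMeanValue u L) : 0 ≤ L :=
  le_of_tendsto_of_tendsto' tendsto_const_nhds hu (fun N => seqAvg_nonneg h N)

lemma hmv_le_one {u : ℕ → ℝ} {L : ℝ} (h : ∀ n, u n ≤ 1) (h0 : ∀ n, 0 ≤ u n)
    (hu : HasMeanValue u L) : L ≤ 1 := by
  have hb : ∀ N, seqAvg u N ≤ 1 := by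
    intro N
    have := seqAvg_abs_le (u := u) (M := 1) (fun n => abs_le.2 ⟨by linarith [h0 n], h n⟩) N
    exact (abs_le.1 this).2
  exact le_of_tendsto_of_tendsto' hu tendsto_const_nhds hb

/-- ε-squeeze criterion for mean values. -/
lemma hmv_of_eps (u : ℕ → ℝ) (L : ℝ)
    (h : ∀ ε : ℝ, 0 < ε → ∃ um up : ℕ → ℝ, ∃ Lm Lp : ℝ,
      HasMeanValue um Lm ∧ HasMeanValue up Lp ∧ (∀ n, um n ≤ u n) ∧ (∀ n, u n ≤ up n) ∧
      L - ε ≤ Lm ∧ Lp ≤ L + ε) : HasMeanValue u L := by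
  rw [HasMeanValue, Metric.tendsto_atTop]
  intro ε hε
  obtain ⟨um, up, Lm, Lp, hm, hp, hmu, hup, hLm, hLp⟩ := h (ε/3) (by linarith)
  rw [HasMeanValue, Metric.tendsto_atTop] at hm hp
  obtain ⟨N1, h1⟩ := hm (ε/3) (by linarith)
  obtain ⟨N2, h2⟩ := hp (ε/3) (by linarith)
  refine ⟨max N1 N2, fun n hn => ?_⟩
  have e1 := h1 n (le_trans (le_max_left _ _) hn)
  have e2 := h2 n (le_trans (le_max_right _ _) hn)
  rw [Real.dist_eq, abs_lt] at e1 e2 ⊢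
  have l1 : seqAvg um n ≤ seqAvg u n := seqAvg_mono hmu n
  have l2 : seqAvg u n ≤ seqAvg up n := seqAvg_mono hup n
  constructor <;> nlinarith

open Classical in
lemma ind_eval (S : Set ℕ) (n : ℕ) : ind S n = if n ∈ S then 1 else 0 :=
  Set.indicator_apply _ _ _

lemma hmv_zero : HasMeanValue (fun _ => (0:ℝ)) 0 := by
  have e : seqAvg (fun _ => (0:ℝ)) = fun _ => (0:ℝ) := by
    funext N; simp [seqAvg]
  rw [HasMeanValue, e]; exact tendsto_const_nhds

section ADF

variable {v : ℕ → ℝ} {F : ℝ → ℝ} {C : ℝ}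

lemma dens_Ico (hF : HasADF v F) {a b : ℝ} (hab : a ≤ b) :
    HasMeanValue (ind {n | v n ∈ Set.Ico a b}) (F b - F a) := by
  refine hmv_congr (hmv_sub (hF b) (hF a)) fun n => ?_
  simp only [ind_eval, Set.mem_setOf_eq, Set.mem_Ico]
  by_cases ha : v n < a <;> by_cases hb : v n < b <;>
    simp [ha, hb] <;> first | linarith | (split_ifs with h <;> linarith)

lemma dens_singleton (hF : HasADF v F) (hFc : Continuous F) (a : ℝ) :
    HasMeanValue (ind {n | v n = a}) 0 := by
  apply hmv_of_eps
  intro ε hε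
  have hca : ContinuousAt F a := hFc.continuousAt
  rw [Metric.continuousAt_iff] at hca
  obtain ⟨δ, hδ, hδ'⟩ := hca ε hε
  have hab : a < a + δ/2 := by linarith
  have hFb : |F (a + δ/2) - F a| < ε := by
    have := hδ' (x := a + δ/2)
      (by rw [Real.dist_eq]; rw [show a + δ/2 - a = δ/2 by ring, abs_of_nonneg] <;> linarith)
    rwa [Real.dist_eq] at this
  refine ⟨fun _ => 0, ind {n | v n ∈ Set.Ico a (a + δ/2)}, 0, F (a + δ/2) - F a, hmv_zero,
    dens_Ico hF hab.le, fun n => ind_nonneg _ n, fun n => ?_, by linarith, ?_⟩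
  · apply ind_mono
    intro m hm
    rw [Set.mem_setOf_eq] at hm ⊢
    rw [hm]
    exact ⟨le_refl a, hab⟩
  · have := (abs_lt.1 hFb).2
    linarith

lemma dens_Icc (hF : HasADF v F) (hFc : Continuous F) {a b : ℝ} (hab : a ≤ b) :
    HasMeanValue (ind {n | v n ∈ Set.Icc a b}) (F b - F a) := by
  have h := hmv_add (dens_Ico hF hab) (dens_singleton hF hFc b)
  rw [add_zero] at h
  refine hmv_congr h fun n => ?_
  simp only [ind_eval, Set.mem_setOf_eq, Set.mem_Ico, Set.mem_Icc]
  have h4 : v n ≤ b ↔ (v n < b ∨ v n = b) := le_iff_lt_or_eq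
  by_cases h1 : a ≤ v n <;> by_cases h2 : v n < b <;> by_cases h3 : v n = b <;>
    simp [h1, h2, h3, h4, hab]

lemma dens_Ioo (hF : HasADF v F) (hFc : Continuous F) {a b : ℝ} (hab : a ≤ b) :
    HasMeanValue (ind {n | v n ∈ Set.Ioo a b}) (F b - F a) := by
  rcases eq_or_lt_of_le hab with rfl | hab'
  · have h0 : F a - F a = 0 := by ring
    rw [h0]
    refine hmv_congr hmv_zero fun n => ?_
    rw [ind_of_not_mem (by simp)]
  · have h := hmv_sub (dens_Ico hF hab) (dens_singleton hF hFc a)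
    rw [sub_zero] at h
    refine hmv_congr h fun n => ?_
    simp only [ind_eval, Set.mem_setOf_eq, Set.mem_Ico, Set.mem_Ioo]
    have h4 : a ≤ v n ↔ (a < v n ∨ v n = a) := le_iff_lt_or_eq.trans (or_congr Iff.rfl eq_comm)
    by_cases h1 : a < v n <;> by_cases h2 : v n < b <;> by_cases h3 : v n = a <;>
      simp [h1, h2, h3, h4, hab', hab'.le]

/-- Structure + density for preimages of order-connected sets. -/
lemma dens_of_ordConn (hv : ∀ n, |v n| ≤ C) (hF : HasADF v F) (hFc : Continuous F)
    {I : Set ℝ} (hI : I.OrdConnected) :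
    ∃ a b : ℝ, a ≤ b ∧ ({n | v n ∈ Set.Ioo a b} ⊆ {n | v n ∈ I}) ∧
      ({n | v n ∈ I} ⊆ {n | v n ∈ Set.Icc a b}) ∧
      HasMeanValue (ind {n | v n ∈ I}) (F b - F a) := by
  by_cases hS : {n | v n ∈ I} = ∅
  · refine ⟨0, 0, le_refl 0, ?_, ?_, ?_⟩
    · intro n hn
      rw [Set.mem_setOf_eq] at hn
      exact absurd hn.2 (not_lt.2 hn.1.le)
    · rw [hS]; exact Set.empty_subset _
    · rw [hS]
      have h0 : F 0 - F 0 = 0 := by ring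
      rw [h0]
      refine hmv_congr hmv_zero fun n => ?_
      rw [ind_of_not_mem (Set.notMem_empty n)]
  · obtain ⟨n₀, hn₀⟩ := Set.nonempty_iff_ne_empty.2 hS
    rw [Set.mem_setOf_eq] at hn₀
    set K := I ∩ Set.Icc (-C) C with hK
    have hKne : K.Nonempty := ⟨v n₀, hn₀, abs_le.1 (hv n₀)⟩
    have hKb : BddBelow K := ⟨-C, fun x hx => hx.2.1⟩
    have hKa : BddAbove K := ⟨C, fun x hx => hx.2.2⟩
    have hab : sInf K ≤ sSup K := csInf_le_csSup hKne hKb hKa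
    have hmemK : ∀ n, v n ∈ I ↔ v n ∈ K := fun n =>
      ⟨fun h => ⟨h, abs_le.1 (hv n)⟩, fun h => h.1⟩
    have hIoo : {n | v n ∈ Set.Ioo (sInf K) (sSup K)} ⊆ {n | v n ∈ I} := by
      intro n hn
      rw [Set.mem_setOf_eq] at hn ⊢
      obtain ⟨y, hy, hy'⟩ := exists_lt_of_csInf_lt hKne hn.1
      obtain ⟨z, hz, hz'⟩ := exists_lt_of_lt_csSup hKne hn.2
      exact hI.out hy.1 hz.1 ⟨hy'.le, hz'.le⟩
    have hIcc : {n | v n ∈ I} ⊆ {n | v n ∈ Set.Icc (sInf K) (sSup K)} := by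
      intro n hn
      rw [Set.mem_setOf_eq] at hn ⊢
      have : v n ∈ K := (hmemK n).1 hn
      exact ⟨csInf_le hKb this, le_csSup hKa this⟩
    exact ⟨sInf K, sSup K, hab, hIoo, hIcc,
      hmv_squeeze (fun n => ind_mono hIoo n) (fun n => ind_mono hIcc n)
        (dens_Ioo hF hFc hab) (dens_Icc hF hFc hab)⟩

end ADF

/-- A continuous trapezoid function: 1 on `[a,b]`, 0 outside `(a-δ, b+δ)`. -/
lemma exists_trap (a b δ : ℝ) (hδ : 0 < δ) :
    ∃ g : ℝ → ℝ, Continuous g ∧ (∀ x, 0 ≤ g x) ∧ (∀ x, g x ≤ 1) ∧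
      (∀ x ∈ Set.Icc a b, g x = 1) ∧ (∀ x, x ∉ Set.Ioo (a - δ) (b + δ) → g x = 0) := by
  refine ⟨fun x => max 0 (min 1 (min ((x - (a - δ))/δ) ((b + δ - x)/δ))), ?_, ?_, ?_, ?_, ?_⟩
  · apply continuous_const.max
    apply continuous_const.min
    exact ((continuous_id.sub continuous_const).div_const δ).min
      ((continuous_const.sub continuous_id).div_const δ)
  · intro x; exact le_max_left _ _
  · intro x
    apply max_le (by norm_num)
    exact min_le_left _ _
  · rintro x ⟨hx1, hx2⟩
    dsimp only
    have e1 : (1:ℝ) ≤ (x - (a - δ))/δ := by rw [le_div_iff₀ hδ]; linarith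
    have e2 : (1:ℝ) ≤ (b + δ - x)/δ := by rw [le_div_iff₀ hδ]; linarith
    rw [min_eq_left (le_min e1 e2), max_eq_right (by norm_num)]
  · intro x hx
    rw [Set.mem_Ioo, not_and_or, not_lt, not_lt] at hx
    dsimp only
    rcases hx with hx | hx
    · have e1 : (x - (a - δ))/δ ≤ 0 := by
        rw [div_nonpos_iff]; right; constructor <;> linarith
      rw [max_eq_left]
      calc min 1 (min ((x - (a - δ))/δ) ((b + δ - x)/δ)) ≤ min ((x - (a - δ))/δ) _ :=
            min_le_right _ _
        _ ≤ (x - (a - δ))/δ := min_le_left _ _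
        _ ≤ 0 := e1
    · have e1 : (b + δ - x)/δ ≤ 0 := by
        rw [div_nonpos_iff]; right; constructor <;> linarith
      rw [max_eq_left]
      calc min 1 (min ((x - (a - δ))/δ) ((b + δ - x)/δ)) ≤ min _ ((b + δ - x)/δ) :=
            min_le_right _ _
        _ ≤ (b + δ - x)/δ := min_le_right _ _
        _ ≤ 0 := e1

/-- A uniform continuity modulus of `F` at a point, in `≤` form. -/
lemma cont_mod {F : ℝ → ℝ} (hFc : Continuous F) (p : ℝ) {ε : ℝ} (hε : 0 < ε) :
    ∃ δ > 0, ∀ x : ℝ, |x - p| ≤ δ → |F x - F p| ≤ ε := by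
  have hca : ContinuousAt F p := hFc.continuousAt
  rw [Metric.continuousAt_iff] at hca
  obtain ⟨δ, hδ, hδ'⟩ := hca ε hε
  refine ⟨δ/2, by linarith, fun x hx => ?_⟩
  have := hδ' (x := x) (by rw [Real.dist_eq]; linarith)
  rw [Real.dist_eq] at this
  exact this.le

section Approx

variable {v : ℕ → ℝ} {F : ℝ → ℝ} {C : ℝ}

/-- Outer continuous approximation to the indicator of a preimage set. -/
lemma outer_approx (hF : HasADF v F) (hFc : Continuous F)
    {S : Set ℕ} {a b : ℝ} (hab : a ≤ b)
    (hIcc : S ⊆ {n | v n ∈ Set.Icc a b}) {ε : ℝ} (hε : 0 < ε) :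
    ∃ gp : ℝ → ℝ, Continuous gp ∧ (∀ x, 0 ≤ gp x) ∧ (∀ x, gp x ≤ 1) ∧
      (∀ n, ind S n ≤ gp (v n)) ∧
      (∀ᶠ N in atTop, seqAvg (fun n => gp (v n)) N ≤ (F b - F a) + 3*ε) := by
  obtain ⟨δ₁, hδ₁, hm₁⟩ := cont_mod hFc a hε
  obtain ⟨δ₂, hδ₂, hm₂⟩ := cont_mod hFc b hε
  set δ := min δ₁ δ₂ with hδdef
  have hδ : 0 < δ := lt_min hδ₁ hδ₂
  obtain ⟨gp, hc, h0, h1, hone, hzero⟩ := exists_trap a b δ hδ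
  refine ⟨gp, hc, h0, h1, fun n => ?_, ?_⟩
  · by_cases hn : n ∈ S
    · rw [ind_of_mem hn, hone _ (hIcc hn)]
    · rw [ind_of_not_mem hn]; exact h0 _
  · have hub : ∀ N, seqAvg (fun n => gp (v n)) N ≤
        seqAvg (ind {n | v n ∈ Set.Ioo (a - δ) (b + δ)}) N := by
      intro N
      apply seqAvg_mono
      intro n
      by_cases hn : v n ∈ Set.Ioo (a - δ) (b + δ)
      · rw [ind_of_mem (by exact hn)]; exact h1 _
      · rw [ind_of_not_mem (by exact hn), hzero _ hn]
    have hdens := dens_Ioo hF hFc (show a - δ ≤ b + δ by linarith)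
    have hev : ∀ᶠ N in atTop, seqAvg (ind {n | v n ∈ Set.Ioo (a - δ) (b + δ)}) N <
        (F (b + δ) - F (a - δ)) + ε := by
      have := Metric.tendsto_atTop.1 hdens ε hε
      obtain ⟨N₀, hN₀⟩ := this
      rw [eventually_atTop]
      refine ⟨N₀, fun N hN => ?_⟩
      have := hN₀ N hN
      rw [Real.dist_eq, abs_lt] at this
      linarith [this.2]
    filter_upwards [hev] with N hN
    have e1 : |F (a - δ) - F a| ≤ ε := hm₁ _ (by
      rw [show a - δ - a = -δ by ring, abs_neg, abs_of_nonneg hδ.le]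
      exact min_le_left δ₁ δ₂)
    have e2 : |F (b + δ) - F b| ≤ ε := hm₂ _ (by
      rw [show b + δ - b = δ by ring, abs_of_nonneg hδ.le]; exact min_le_right δ₁ δ₂)
    rw [abs_le] at e1 e2
    have := hub N
    linarith [e1.1, e1.2, e2.1, e2.2]

/-- Inner continuous approximation to the indicator of a preimage set. -/
lemma inner_approx (hF : HasADF v F) (hFc : Continuous F)
    {S : Set ℕ} {a b : ℝ} (hab : a ≤ b)
    (hIoo : {n | v n ∈ Set.Ioo a b} ⊆ S) {ε : ℝ} (hε : 0 < ε) :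
    ∃ gm : ℝ → ℝ, Continuous gm ∧ (∀ x, 0 ≤ gm x) ∧ (∀ x, gm x ≤ 1) ∧
      (∀ n, gm (v n) ≤ ind S n) ∧
      (∀ᶠ N in atTop, (F b - F a) - 3*ε ≤ seqAvg (fun n => gm (v n)) N) := by
  rcases eq_or_lt_of_le hab with rfl | hab'
  · refine ⟨fun _ => 0, continuous_const, fun x => le_refl 0, fun x => by norm_num,
      fun n => ind_nonneg _ _, ?_⟩
    apply Eventually.of_forall
    intro N
    have : seqAvg (fun _ : ℕ => (0:ℝ)) N = 0 := by simp [seqAvg]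
    rw [this]
    linarith
  · obtain ⟨δ₁, hδ₁, hm₁⟩ := cont_mod hFc a hε
    obtain ⟨δ₂, hδ₂, hm₂⟩ := cont_mod hFc b hε
    set η := min (min δ₁ δ₂) ((b - a)/4) with hηdef
    have hη : 0 < η := lt_min (lt_min hδ₁ hδ₂) (by linarith)
    have hηδ₁ : η ≤ δ₁ := le_trans (min_le_left _ _) (min_le_left _ _)
    have hηδ₂ : η ≤ δ₂ := le_trans (min_le_left _ _) (min_le_right _ _)
    have hηab : η ≤ (b - a)/4 := min_le_right _ _
    obtain ⟨gm, hc, h0, h1, hone, hzero⟩ := exists_trap (a + η) (b - η) η hη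
    refine ⟨gm, hc, h0, h1, fun n => ?_, ?_⟩
    · by_cases hn : v n ∈ Set.Ioo a b
      · exact le_trans (h1 _) (by rw [ind_of_mem (hIoo hn)])
      · have : gm (v n) = 0 := by
          apply hzero
          rw [show a + η - η = a by ring, show b - η + η = b by ring]
          exact hn
        rw [this]
        exact ind_nonneg _ _
    · have hlb : ∀ N, seqAvg (ind {n | v n ∈ Set.Icc (a + η) (b - η)}) N ≤
          seqAvg (fun n => gm (v n)) N := by
        intro N
        apply seqAvg_mono
        intro n
        by_cases hn : v n ∈ Set.Icc (a + η) (b - η)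
        · rw [ind_of_mem (by exact hn), hone _ hn]
        · rw [ind_of_not_mem (by exact hn)]; exact h0 _
      have hdens := dens_Icc hF hFc (show a + η ≤ b - η by linarith)
      have hev : ∀ᶠ N in atTop, (F (b - η) - F (a + η)) - ε <
          seqAvg (ind {n | v n ∈ Set.Icc (a + η) (b - η)}) N := by
        obtain ⟨N₀, hN₀⟩ := Metric.tendsto_atTop.1 hdens ε hε
        rw [eventually_atTop]
        refine ⟨N₀, fun N hN => ?_⟩
        have := hN₀ N hN
        rw [Real.dist_eq, abs_lt] at this
        linarith [this.1]
      filter_upwards [hev] with N hN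
      have e1 : |F (a + η) - F a| ≤ ε := hm₁ _ (by
        rw [show a + η - a = η by ring, abs_of_nonneg hη.le]; exact hηδ₁)
      have e2 : |F (b - η) - F b| ≤ ε := hm₂ _ (by
        rw [show b - η - b = -η by ring, abs_neg, abs_of_nonneg hη.le]; exact hηδ₂)
      rw [abs_le] at e1 e2
      calc (F b - F a) - 3*ε ≤ (F (b - η) - F (a + η)) - ε := by
            linarith [e1.1, e1.2, e2.1, e2.2]
        _ ≤ seqAvg (ind {n | v n ∈ Set.Icc (a + η) (b - η)}) N := hN.le
        _ ≤ seqAvg (fun n => gm (v n)) N := hlb N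

end Approx

private lemma arith_up {dS dT ε X Y P : ℝ} (hdS0 : 0 ≤ dS) (hdS1 : dS ≤ 1)
    (hdT0 : 0 ≤ dT) (hdT1 : dT ≤ 1) (hε : 0 < ε) (hε1 : ε ≤ 1)
    (hX0 : 0 ≤ X) (hY0 : 0 ≤ Y) (hX : X ≤ dS + 3*ε) (hY : Y ≤ dT + 3*ε)
    (hP : P ≤ X*Y + ε) : P ≤ dS*dT + 16*ε := by
  have e2 : X * Y ≤ (dS + 3*ε) * (dT + 3*ε) := mul_le_mul hX hY hY0 (by linarith)
  nlinarith

private lemma arith_lo {dS dT ε X Y P : ℝ} (hdS0 : 0 ≤ dS) (hdS1 : dS ≤ 1)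
    (hdT0 : 0 ≤ dT) (hdT1 : dT ≤ 1) (hε : 0 < ε) (hε1 : ε ≤ 1)
    (hX0 : 0 ≤ X) (hY0 : 0 ≤ Y) (hX1 : X ≤ 1) (hY1 : Y ≤ 1)
    (hX : dS - 3*ε ≤ X) (hY : dT - 3*ε ≤ Y)
    (hP : X*Y - ε ≤ P) : dS*dT - 7*ε ≤ P := by
  rcases le_or_gt dS (3*ε) with hc | hc
  · nlinarith [mul_nonneg hX0 hY0]
  · rcases le_or_gt dT (3*ε) with hc' | hc'
    · nlinarith [mul_nonneg hX0 hY0]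
    · have e2 : (dS - 3*ε) * (dT - 3*ε) ≤ X * Y := mul_le_mul hX hY (by linarith) hX0
      nlinarith

lemma statIndep_imp_indep {v w : ℕ → ℝ} {C : ℝ}
    (hv : ∀ n, |v n| ≤ C) (hw : ∀ n, |w n| ≤ C) {F F₁ : ℝ → ℝ}
    (hF : HasADF v F) (hF₁ : HasADF w F₁) (hFc : Continuous F) (hF₁c : Continuous F₁)
    (hSI : StatIndep v w) {I I₁ : Set ℝ} (hI : I.OrdConnected) (hI₁ : I₁.OrdConnected) :
    IndepDensitySets {n | v n ∈ I} {n | w n ∈ I₁} := by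
  obtain ⟨a, b, hab, hIoo, hIcc, hdS⟩ := dens_of_ordConn hv hF hFc hI
  obtain ⟨a₁, b₁, hab₁, hIoo₁, hIcc₁, hdT⟩ := dens_of_ordConn hw hF₁ hF₁c hI₁
  set S := {n | v n ∈ I} with hSdef
  set T := {n | w n ∈ I₁} with hTdef
  set dS := F b - F a with hdSdef
  set dT := F₁ b₁ - F₁ a₁ with hdTdef
  have hdS0 : 0 ≤ dS := hmv_nonneg (fun n => ind_nonneg _ n) hdS
  have hdS1 : dS ≤ 1 := hmv_le_one (fun n => ind_le_one _ n) (fun n => ind_nonneg _ n) hdS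
  have hdT0 : 0 ≤ dT := hmv_nonneg (fun n => ind_nonneg _ n) hdT
  have hdT1 : dT ≤ 1 := hmv_le_one (fun n => ind_le_one _ n) (fun n => ind_nonneg _ n) hdT
  refine ⟨dS, dT, dS * dT, hdS, hdT, ?_, rfl⟩
  rw [hasDensity_iff_hmv, HasMeanValue, Metric.tendsto_atTop]
  intro ε₀ hε₀
  set ε := min 1 (ε₀ / 20) with hεdef
  have hε : 0 < ε := lt_min one_pos (by linarith)
  have hε1 : ε ≤ 1 := min_le_left _ _
  have hεε₀ : ε ≤ ε₀ / 20 := min_le_right _ _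
  -- approximations
  obtain ⟨gp, gpc, gp0, gp1, gpge, gpub⟩ := outer_approx hF hFc hab hIcc hε
  obtain ⟨gm, gmc, gm0, gm1, gmle, gmlb⟩ := inner_approx hF hFc hab hIoo hε
  obtain ⟨gp', gpc', gp0', gp1', gpge', gpub'⟩ := outer_approx hF₁ hF₁c hab₁ hIcc₁ hε
  obtain ⟨gm', gmc', gm0', gm1', gmle', gmlb'⟩ := inner_approx hF₁ hF₁c hab₁ hIoo₁ hε
  -- statistical independence applied to the trapezoids
  have hvC : ∀ n, v n ∈ Set.Icc (-C) C := fun n => abs_le.1 (hv n)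
  have hwC : ∀ n, w n ∈ Set.Icc (-C) C := fun n => abs_le.1 (hw n)
  have hsi1 := hSI (-C) C hvC hwC gp gp' gpc.continuousOn gpc'.continuousOn
  have hsi2 := hSI (-C) C hvC hwC gm gm' gmc.continuousOn gmc'.continuousOn
  have hev1 : ∀ᶠ N in atTop,
      |seqAvg (fun n => gp (v n)) N * seqAvg (fun n => gp' (w n)) N -
        seqAvg (fun n => gp (v n) * gp' (w n)) N| < ε := by
    obtain ⟨N₀, hN₀⟩ := Metric.tendsto_atTop.1 hsi1 ε hε
    rw [eventually_atTop]
    exact ⟨N₀, fun N hN => by have := hN₀ N hN; rwa [Real.dist_eq, sub_zero] at this⟩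
  have hev2 : ∀ᶠ N in atTop,
      |seqAvg (fun n => gm (v n)) N * seqAvg (fun n => gm' (w n)) N -
        seqAvg (fun n => gm (v n) * gm' (w n)) N| < ε := by
    obtain ⟨N₀, hN₀⟩ := Metric.tendsto_atTop.1 hsi2 ε hε
    rw [eventually_atTop]
    exact ⟨N₀, fun N hN => by have := hN₀ N hN; rwa [Real.dist_eq, sub_zero] at this⟩
  -- pointwise sandwich of the product indicator
  have hpt_up : ∀ n, ind (S ∩ T) n ≤ gp (v n) * gp' (w n) := by
    intro n
    rw [ind_inter]
    exact mul_le_mul (gpge n) (gpge' n) (ind_nonneg _ n) (gp0 _)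
  have hpt_lo : ∀ n, gm (v n) * gm' (w n) ≤ ind (S ∩ T) n := by
    intro n
    rw [ind_inter]
    exact mul_le_mul (gmle n) (gmle' n) (gm0' _) (ind_nonneg _ n)
  have hall : ∀ᶠ N in atTop, |seqAvg (ind (S ∩ T)) N - dS * dT| < ε₀ := by
    filter_upwards [hev1, hev2, gpub, gmlb, gpub', gmlb'] with N h1 h2 h3 h4 h5 h6
    -- abbreviations
    set X := seqAvg (fun n => gp (v n)) N
    set Y := seqAvg (fun n => gp' (w n)) N
    set X' := seqAvg (fun n => gm (v n)) N
    set Y' := seqAvg (fun n => gm' (w n)) N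
    have hX0 : 0 ≤ X := seqAvg_nonneg (fun n => gp0 _) N
    have hY0 : 0 ≤ Y := seqAvg_nonneg (fun n => gp0' _) N
    have hX'0 : 0 ≤ X' := seqAvg_nonneg (fun n => gm0 _) N
    have hY'0 : 0 ≤ Y' := seqAvg_nonneg (fun n => gm0' _) N
    have hX'1 : X' ≤ 1 := by
      have := seqAvg_abs_le (u := fun n => gm (v n)) (M := 1)
        (fun n => abs_le.2 ⟨by linarith [gm0 (v n)], gm1 (v n)⟩) N
      exact (abs_le.1 this).2
    have hY'1 : Y' ≤ 1 := by
      have := seqAvg_abs_le (u := fun n => gm' (w n)) (M := 1)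
        (fun n => abs_le.2 ⟨by linarith [gm0' (w n)], gm1' (w n)⟩) N
      exact (abs_le.1 this).2
    have hup : seqAvg (ind (S ∩ T)) N ≤ seqAvg (fun n => gp (v n) * gp' (w n)) N :=
      seqAvg_mono hpt_up N
    have hlo : seqAvg (fun n => gm (v n) * gm' (w n)) N ≤ seqAvg (ind (S ∩ T)) N :=
      seqAvg_mono hpt_lo N
    rw [abs_lt] at h1 h2
    have hupper : seqAvg (ind (S ∩ T)) N ≤ dS * dT + 16 * ε :=
      arith_up hdS0 hdS1 hdT0 hdT1 hε hε1 hX0 hY0 h3 h5 (by linarith [h1.1])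
    have hlower : dS * dT - 7 * ε ≤ seqAvg (ind (S ∩ T)) N :=
      arith_lo hdS0 hdS1 hdT0 hdT1 hε hε1 hX'0 hY'0 hX'1 hY'1 h4 h6 (by linarith [h2.2])
    rw [abs_lt]
    constructor <;> linarith
  obtain ⟨N₀, hN₀⟩ := eventually_atTop.1 hall
  exact ⟨N₀, fun N hN => by rw [Real.dist_eq]; exact hN₀ N hN⟩

open Classical in
/-- The half-open intervals `[a+k h, a+(k+1) h)`, `k < m`, partition `[a, a+m h)`. -/
private lemma partition_sum {a h' : ℝ} (hh : 0 < h') {m : ℕ} {t : ℝ} (ht1 : a ≤ t)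
    (ht2 : t < a + m * h') :
    ∑ k ∈ Finset.range m, (if t ∈ Set.Ico (a + k*h') (a + (k+1)*h') then (1:ℝ) else 0) = 1 := by
  set k0 := ⌊(t - a)/h'⌋₊ with hk0def
  have hnn : 0 ≤ (t - a)/h' := div_nonneg (by linarith) hh.le
  have hk0 : (k0:ℝ) ≤ (t - a)/h' := Nat.floor_le hnn
  have hk0' : (t - a)/h' < k0 + 1 := Nat.lt_floor_add_one _
  have hle : a + k0 * h' ≤ t := by
    rw [le_div_iff₀ hh] at hk0
    linarith
  have hlt : t < a + (k0 + 1) * h' := by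
    rw [div_lt_iff₀ hh] at hk0'
    push_cast
    linarith
  have hk0m : k0 < m := by
    have : (k0:ℝ) < m := by
      apply lt_of_le_of_lt hk0
      rw [div_lt_iff₀ hh]
      linarith
    exact_mod_cast this
  rw [Finset.sum_eq_single_of_mem k0 (Finset.mem_range.2 hk0m)]
  · rw [if_pos ⟨hle, by push_cast; exact hlt⟩]
  · intro j hj hjk
    rw [if_neg]
    intro hmem
    rcases lt_or_gt_of_ne hjk with hc | hc
    · -- j < k0 : then t < a + (j+1) h' ≤ a + k0 h' ≤ t
      have : ((j:ℝ) + 1) ≤ (k0:ℝ) := by exact_mod_cast hc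
      have := mul_le_mul_of_nonneg_right this hh.le
      exact absurd hmem.2 (by push_cast; linarith)
    · -- k0 < j : a + j h' ≤ t contradict t < a + (k0+1) h'
      have : ((k0:ℝ) + 1) ≤ (j:ℝ) := by exact_mod_cast hc
      have := mul_le_mul_of_nonneg_right this hh.le
      exact absurd hmem.1 (by push_cast; linarith)

private lemma abs_prod_diff {gv g₁w svn swn M ε : ℝ} (hM : 0 ≤ M) (hε : 0 ≤ ε)
    (h1 : |gv| ≤ M) (h2 : |gv - svn| ≤ ε) (h3 : |g₁w - swn| ≤ ε) (h4 : |swn| ≤ M + ε) :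
    |gv*g₁w - svn*swn| ≤ M*ε + (M+ε)*ε := by
  have e : gv*g₁w - svn*swn = gv*(g₁w - swn) + swn*(gv - svn) := by ring
  rw [e]
  apply (abs_add_le _ _).trans
  rw [abs_mul, abs_mul]
  exact add_le_add (mul_le_mul h1 h3 (abs_nonneg _) hM) (mul_le_mul h4 h2 (abs_nonneg _) (by linarith))

private lemma arith_final {G G₁ Sv Sw P Q M ε : ℝ} (hM : 0 ≤ M) (hε : 0 < ε) (hε1 : ε ≤ 1)
    (h1 : |G - Sv| ≤ ε) (h2 : |G₁ - Sw| ≤ ε) (hG : |G| ≤ M) (hG₁ : |G₁| ≤ M)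
    (hSw : |Sw| ≤ M + ε)
    (hPQ : |P - Q| ≤ M*ε + (M+ε)*ε) (hQ : |Sv*Sw - Q| < ε) : |G*G₁ - P| < (4*M+4)*ε := by
  have key : |G*G₁ - Sv*Sw| ≤ M*ε + (M+ε)*ε :=
    abs_prod_diff hM hε.le hG h1 h2 hSw
  have e : G*G₁ - P = (G*G₁ - Sv*Sw) + (Sv*Sw - Q) + (Q - P) := by ring
  rw [e]
  have t1 := abs_add_le ((G*G₁ - Sv*Sw) + (Sv*Sw - Q)) (Q - P)
  have t2 := abs_add_le (G*G₁ - Sv*Sw) (Sv*Sw - Q)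
  have t3 : |Q - P| = |P - Q| := abs_sub_comm _ _
  nlinarith [abs_nonneg (P - Q)]

/-- Independence implies statistical independence. -/
lemma indep_imp_statIndep {v w : ℕ → ℝ} (hI : IndepSeq v w) : StatIndep v w := by
  intro a b hva hwa g g₁ hg hg₁
  have hab : a ≤ b := le_trans (hva 0).1 (hva 0).2
  obtain ⟨M₀, hM₀⟩ := isCompact_Icc.exists_bound_of_continuousOn hg
  obtain ⟨M₁, hM₁⟩ := isCompact_Icc.exists_bound_of_continuousOn hg₁
  set M := max (max M₀ M₁) 0 with hMdef
  have hM : 0 ≤ M := le_max_right _ _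
  have hgM : ∀ t ∈ Set.Icc a b, |g t| ≤ M := fun t ht => by
    have := hM₀ t ht
    rw [Real.norm_eq_abs] at this
    exact this.trans (le_max_of_le_left (le_max_left _ _))
  have hg₁M : ∀ t ∈ Set.Icc a b, |g₁ t| ≤ M := fun t ht => by
    have := hM₁ t ht
    rw [Real.norm_eq_abs] at this
    exact this.trans (le_max_of_le_left (le_max_right _ _))
  rw [Metric.tendsto_atTop]
  intro ε₀ hε₀
  set ε := min 1 (ε₀/(4*M+5)) with hεdef
  have hε : 0 < ε := lt_min one_pos (by positivity)
  have hε1 : ε ≤ 1 := min_le_left _ _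
  have hεε₀ : (4*M+4)*ε < ε₀ := by
    have h1 : ε ≤ ε₀/(4*M+5) := min_le_right _ _
    have h2 : (4*M+4)*ε ≤ (4*M+4)*(ε₀/(4*M+5)) := by
      apply mul_le_mul_of_nonneg_left h1 (by linarith)
    apply lt_of_le_of_lt h2
    have h4 : (4*M+4) * (ε₀/(4*M+5)) = ((4*M+4) * ε₀) / (4*M+5) := by ring
    rw [h4, div_lt_iff₀ (by linarith : (0:ℝ) < 4*M+5)]
    nlinarith
  -- uniform continuity moduli
  obtain ⟨δ₁, hδ₁, hu₁⟩ := Metric.uniformContinuousOn_iff.1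
    (isCompact_Icc.uniformContinuousOn_of_continuous hg) ε hε
  obtain ⟨δ₂, hδ₂, hu₂⟩ := Metric.uniformContinuousOn_iff.1
    (isCompact_Icc.uniformContinuousOn_of_continuous hg₁) ε hε
  set δ := min δ₁ δ₂ with hδdef
  have hδ : 0 < δ := lt_min hδ₁ hδ₂
  -- the partition
  obtain ⟨m, hm⟩ := exists_nat_gt ((b + 1 - a)/δ)
  have hba : (0:ℝ) < b + 1 - a := by linarith
  have hm0 : 0 < (m:ℝ) := lt_trans (by positivity) hm
  set h' := (b + 1 - a)/m with hh'def
  have hh' : 0 < h' := by positivity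
  have hh'δ : h' < δ := by
    rw [hh'def, div_lt_iff₀ hm0]
    rw [div_lt_iff₀ hδ] at hm
    linarith [hm]
  set x : ℕ → ℝ := fun k => a + k * h' with hxdef
  set A : ℕ → Set ℕ := fun k => {n | v n ∈ Set.Ico (x k) (x (k+1))} with hAdef
  set B : ℕ → Set ℕ := fun k => {n | w n ∈ Set.Ico (x k) (x (k+1))} with hBdef
  -- densities exist
  have hexA : ∀ k : ℕ, ∃ d : ℝ, HasMeanValue (ind (A k)) d := by
    intro k
    obtain ⟨dS, dT, dST, h1, _, _, _⟩ := hI (Set.Ico (x k) (x (k+1))) Set.univ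
      Set.ordConnected_Ico Set.ordConnected_univ
    exact ⟨dS, h1⟩
  have hexB : ∀ k : ℕ, ∃ d : ℝ, HasMeanValue (ind (B k)) d := by
    intro k
    obtain ⟨dS, dT, dST, _, h2, _, _⟩ := hI Set.univ (Set.Ico (x k) (x (k+1)))
      Set.ordConnected_univ Set.ordConnected_Ico
    exact ⟨dT, h2⟩
  choose d hd using hexA
  choose e he using hexB
  have hjoint : ∀ k j : ℕ, HasMeanValue (ind (A k ∩ B j)) (d k * e j) := by
    intro k j
    obtain ⟨dS, dT, dST, h1, h2, h3, h4⟩ := hI (Set.Ico (x k) (x (k+1)))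
      (Set.Ico (x j) (x (j+1))) Set.ordConnected_Ico Set.ordConnected_Ico
    have e1 : dS = d k := hmv_unique h1 (hd k)
    have e2 : dT = e j := hmv_unique h2 (he j)
    rw [← e1, ← e2, ← h4]
    exact h3
  -- partition of unity at every point
  have hmh : (m:ℝ) * h' = b + 1 - a := by
    rw [hh'def]
    field_simp
  have honeA : ∀ n, ∑ k ∈ Finset.range m, ind (A k) n = 1 := by
    intro n
    have hps := partition_sum hh' (t := v n) (m := m) (hva n).1
      (by rw [hmh]; linarith [(hva n).2])
    rw [← hps]
    apply Finset.sum_congr rfl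
    intro k _
    rw [ind_eval]
    congr 1
    simp only [hAdef, Set.mem_setOf_eq, hxdef]
    push_cast
    rfl
  have honeB : ∀ n, ∑ k ∈ Finset.range m, ind (B k) n = 1 := by
    intro n
    have hps := partition_sum hh' (t := w n) (m := m) (hwa n).1
      (by rw [hmh]; linarith [(hwa n).2])
    rw [← hps]
    apply Finset.sum_congr rfl
    intro k _
    rw [ind_eval]
    congr 1
    simp only [hBdef, Set.mem_setOf_eq, hxdef]
    push_cast
    rfl
  -- step sequences
  set sv : ℕ → ℝ := fun n => ∑ k ∈ Finset.range m, g (x k) * ind (A k) n with hsvdef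
  set sw : ℕ → ℝ := fun n => ∑ k ∈ Finset.range m, g₁ (x k) * ind (B k) n with hswdef
  have hxk1 : ∀ k : ℕ, x (k+1) = x k + h' := by
    intro k
    simp only [hxdef]
    push_cast
    ring
  -- pointwise approximation for v
  have hptv : ∀ n, |g (v n) - sv n| ≤ ε := by
    intro n
    have e1 : g (v n) - sv n = ∑ k ∈ Finset.range m, (g (v n) - g (x k)) * ind (A k) n := by
      have e2 : ∑ k ∈ Finset.range m, (g (v n) - g (x k)) * ind (A k) n
          = g (v n) * (∑ k ∈ Finset.range m, ind (A k) n)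
            - ∑ k ∈ Finset.range m, g (x k) * ind (A k) n := by
        rw [Finset.mul_sum, ← Finset.sum_sub_distrib]
        apply Finset.sum_congr rfl
        intro k _
        ring
      rw [e2, honeA n, mul_one]
    rw [e1]
    apply (Finset.abs_sum_le_sum_abs _ _).trans
    have hterm : ∀ k ∈ Finset.range m, |(g (v n) - g (x k)) * ind (A k) n| ≤ ε * ind (A k) n := by
      intro k _
      rw [abs_mul, abs_of_nonneg (ind_nonneg _ _)]
      by_cases hn : n ∈ A k
      · rw [ind_of_mem hn, mul_one, mul_one]
        have hnA : v n ∈ Set.Ico (x k) (x (k+1)) := by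
          have := hn
          simp only [hAdef, Set.mem_setOf_eq] at this
          exact this
        have hxka : a ≤ x k := by
          simp only [hxdef]
          have : (0:ℝ) ≤ (k:ℝ) * h' := mul_nonneg (Nat.cast_nonneg k) hh'.le
          linarith
        have hxkb : x k ≤ b := le_trans hnA.1 (hva n).2
        have hdist : dist (v n) (x k) < δ₁ := by
          rw [Real.dist_eq, abs_of_nonneg (by linarith [hnA.1])]
          have := hnA.2
          rw [hxk1 k] at this
          have hδδ₁ : δ ≤ δ₁ := min_le_left _ _
          linarith
        have := hu₁ (v n) (hva n) (x k) ⟨hxka, hxkb⟩ hdist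
        rw [Real.dist_eq] at this
        exact this.le
      · rw [ind_of_not_mem hn, mul_zero, mul_zero]
    apply (Finset.sum_le_sum hterm).trans
    rw [← Finset.mul_sum, honeA n, mul_one]
  -- pointwise approximation for w
  have hptw : ∀ n, |g₁ (w n) - sw n| ≤ ε := by
    intro n
    have e1 : g₁ (w n) - sw n = ∑ k ∈ Finset.range m, (g₁ (w n) - g₁ (x k)) * ind (B k) n := by
      have e2 : ∑ k ∈ Finset.range m, (g₁ (w n) - g₁ (x k)) * ind (B k) n
          = g₁ (w n) * (∑ k ∈ Finset.range m, ind (B k) n)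
            - ∑ k ∈ Finset.range m, g₁ (x k) * ind (B k) n := by
        rw [Finset.mul_sum, ← Finset.sum_sub_distrib]
        apply Finset.sum_congr rfl
        intro k _
        ring
      rw [e2, honeB n, mul_one]
    rw [e1]
    apply (Finset.abs_sum_le_sum_abs _ _).trans
    have hterm : ∀ k ∈ Finset.range m, |(g₁ (w n) - g₁ (x k)) * ind (B k) n| ≤ ε * ind (B k) n := by
      intro k _
      rw [abs_mul, abs_of_nonneg (ind_nonneg _ _)]
      by_cases hn : n ∈ B k
      · rw [ind_of_mem hn, mul_one, mul_one]
        have hnB : w n ∈ Set.Ico (x k) (x (k+1)) := by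
          have := hn
          simp only [hBdef, Set.mem_setOf_eq] at this
          exact this
        have hxka : a ≤ x k := by
          simp only [hxdef]
          have : (0:ℝ) ≤ (k:ℝ) * h' := mul_nonneg (Nat.cast_nonneg k) hh'.le
          linarith
        have hxkb : x k ≤ b := le_trans hnB.1 (hwa n).2
        have hdist : dist (w n) (x k) < δ₂ := by
          rw [Real.dist_eq, abs_of_nonneg (by linarith [hnB.1])]
          have := hnB.2
          rw [hxk1 k] at this
          have hδδ₂ : δ ≤ δ₂ := min_le_right _ _
          linarith
        have := hu₂ (w n) (hwa n) (x k) ⟨hxka, hxkb⟩ hdist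
        rw [Real.dist_eq] at this
        exact this.le
      · rw [ind_of_not_mem hn, mul_zero, mul_zero]
    apply (Finset.sum_le_sum hterm).trans
    rw [← Finset.mul_sum, honeB n, mul_one]
  have hsvabs : ∀ n, |sv n| ≤ M + ε := by
    intro n
    have h := abs_sub (g (v n)) (g (v n) - sv n)
    rw [show g (v n) - (g (v n) - sv n) = sv n by ring] at h
    exact h.trans (add_le_add (hgM _ (hva n)) (hptv n))
  have hswabs : ∀ n, |sw n| ≤ M + ε := by
    intro n
    have h := abs_sub (g₁ (w n)) (g₁ (w n) - sw n)
    rw [show g₁ (w n) - (g₁ (w n) - sw n) = sw n by ring] at h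
    exact h.trans (add_le_add (hg₁M _ (hwa n)) (hptw n))
  -- mean values of step sequences
  have hsv' : HasMeanValue sv (∑ k ∈ Finset.range m, g (x k) * d k) :=
    hmv_finset_sum _ _ _ (fun k _ => hmv_const_mul (g (x k)) (hd k))
  have hsw' : HasMeanValue sw (∑ k ∈ Finset.range m, g₁ (x k) * e k) :=
    hmv_finset_sum _ _ _ (fun k _ => hmv_const_mul (g₁ (x k)) (he k))
  have hprodpt : ∀ n, sv n * sw n = ∑ k ∈ Finset.range m, ∑ j ∈ Finset.range m,
      (g (x k) * g₁ (x j)) * ind (A k ∩ B j) n := by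
    intro n
    simp only [hsvdef, hswdef]
    rw [Finset.sum_mul_sum]
    apply Finset.sum_congr rfl
    intro k _
    apply Finset.sum_congr rfl
    intro j _
    rw [ind_inter]
    ring
  have hprod : HasMeanValue (fun n => sv n * sw n)
      ((∑ k ∈ Finset.range m, g (x k) * d k) * (∑ j ∈ Finset.range m, g₁ (x j) * e j)) := by
    have h1 : HasMeanValue (fun n => ∑ k ∈ Finset.range m, ∑ j ∈ Finset.range m,
        (g (x k) * g₁ (x j)) * ind (A k ∩ B j) n)
        (∑ k ∈ Finset.range m, ∑ j ∈ Finset.range m, (g (x k) * g₁ (x j)) * (d k * e j)) := by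
      apply hmv_finset_sum
      intro k _
      apply hmv_finset_sum
      intro j _
      exact hmv_const_mul _ (hjoint k j)
    have h2 := hmv_congr h1 (fun n => (hprodpt n).symm)
    have h3 : (∑ k ∈ Finset.range m, ∑ j ∈ Finset.range m,
        (g (x k) * g₁ (x j)) * (d k * e j))
        = (∑ k ∈ Finset.range m, g (x k) * d k) * (∑ j ∈ Finset.range m, g₁ (x j) * e j) := by
      rw [Finset.sum_mul_sum]
      apply Finset.sum_congr rfl
      intro k _
      apply Finset.sum_congr rfl
      intro j _
      ring
    rw [h3] at h2
    exact h2
  -- the step correlation tends to 0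
  have hstep : Tendsto (fun N => seqAvg sv N * seqAvg sw N -
      seqAvg (fun n => sv n * sw n) N) atTop (nhds 0) := by
    have := (Tendsto.mul hsv' hsw').sub hprod
    simpa using this
  have hev : ∀ᶠ N in atTop, |seqAvg sv N * seqAvg sw N -
      seqAvg (fun n => sv n * sw n) N| < ε := by
    obtain ⟨N₀, hN₀⟩ := Metric.tendsto_atTop.1 hstep ε hε
    rw [eventually_atTop]
    exact ⟨N₀, fun N hN => by have := hN₀ N hN; rwa [Real.dist_eq, sub_zero] at this⟩
  obtain ⟨N₀, hN₀⟩ := eventually_atTop.1 hev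
  refine ⟨N₀, fun N hN => ?_⟩
  rw [Real.dist_eq, sub_zero]
  have hGSv : |seqAvg (fun n => g (v n)) N - seqAvg sv N| ≤ ε := by
    rw [← seqAvg_sub]
    exact seqAvg_abs_le (fun n => hptv n) N
  have hG₁Sw : |seqAvg (fun n => g₁ (w n)) N - seqAvg sw N| ≤ ε := by
    rw [← seqAvg_sub]
    exact seqAvg_abs_le (fun n => hptw n) N
  have hG : |seqAvg (fun n => g (v n)) N| ≤ M := seqAvg_abs_le (fun n => hgM _ (hva n)) N
  have hG₁ : |seqAvg (fun n => g₁ (w n)) N| ≤ M := seqAvg_abs_le (fun n => hg₁M _ (hwa n)) N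
  have hSw : |seqAvg sw N| ≤ M + ε := seqAvg_abs_le hswabs N
  have hPQ : |seqAvg (fun n => g (v n) * g₁ (w n)) N - seqAvg (fun n => sv n * sw n) N| ≤
      M*ε + (M+ε)*ε := by
    rw [← seqAvg_sub]
    apply seqAvg_abs_le
    intro n
    exact abs_prod_diff hM hε.le (hgM _ (hva n)) (hptv n) (hptw n) (hswabs n)
  exact lt_trans (arith_final hM hε hε1 hGSv hG₁Sw hG hG₁ hSw hPQ (hN₀ N hN)) hεε₀


theorem indep_iff_statIndep (v w : ℕ → ℝ) (C : ℝ)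
    (hv : ∀ n, |v n| ≤ C) (hw : ∀ n, |w n| ≤ C) (F F₁ : ℝ → ℝ)
    (hF : HasADF v F) (hF₁ : HasADF w F₁) (hFc : Continuous F) (hF₁c : Continuous F₁) :
    IndepSeq v w ↔ StatIndep v w := by
  constructor
  · exact fun h => indep_imp_statIndep h
  · intro hSI I I₁ hIoc hI₁oc
    exact statIndep_imp_indep hv hw hF hF₁ hFc hF₁c hSI hIoc hI₁oc
end

section
/- Let v, w be bounded independent sequences with continuous asymptotic distribution functions F and F₁ respectively. Then the sequence v + w has an asymptotic distribution function F₂ given by F₂(x) = ∬_{{(t₁,t₂) : t₁+t₂ ≤ x}} dF(t₁) dF₁(t₂). -/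
open Filter MeasureTheory Topology

open scoped ENNReal

lemma countBelow_nonneg (A : Set ℕ) (N : ℕ) : 0 ≤ countBelow A N :=
  Finset.sum_nonneg fun n _ => Set.indicator_nonneg (fun _ _ => zero_le_one) n

lemma countBelow_mono {A B : Set ℕ} (h : A ⊆ B) (N : ℕ) : countBelow A N ≤ countBelow B N :=
  Finset.sum_le_sum fun n _ =>
    Set.indicator_le_indicator_of_subset h (fun _ => zero_le_one) n

lemma countBelow_union {A B : Set ℕ} (h : Disjoint A B) (N : ℕ) :
    countBelow (A ∪ B) N = countBelow A N + countBelow B N := by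
  rw [countBelow, countBelow, countBelow, ← Finset.sum_add_distrib]
  refine Finset.sum_congr rfl fun n _ => ?_
  by_cases hA : n ∈ A
  · have hB : n ∉ B := fun hB => h.ne_of_mem hA hB rfl
    simp [Set.indicator_apply, hA, hB]
  · by_cases hB : n ∈ B <;> simp [Set.indicator_apply, hA, hB]

lemma ratio_mono {A B : Set ℕ} (h : A ⊆ B) (N : ℕ) :
    countBelow A N / N ≤ countBelow B N / N := by
  exact div_le_div_of_nonneg_right (countBelow_mono h N) (Nat.cast_nonneg N)

lemma hasDensity_mono {A B : Set ℕ} {a b : ℝ} (h : A ⊆ B)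
    (hA : HasDensity A a) (hB : HasDensity B b) : a ≤ b :=
  le_of_tendsto_of_tendsto' hA hB (ratio_mono h)

lemma hasDensity_union {A B : Set ℕ} {a b : ℝ} (h : Disjoint A B)
    (hA : HasDensity A a) (hB : HasDensity B b) : HasDensity (A ∪ B) (a + b) := by
  have := hA.add hB
  refine this.congr fun N => ?_
  simp [countBelow_union h, add_div]

lemma hasDensity_empty : HasDensity ∅ 0 := by
  have : ∀ N : ℕ, countBelow ∅ N / N = 0 := by intro N; simp [countBelow]
  simpa [HasDensity, this] using tendsto_const_nhds

lemma hasDensity_univ : HasDensity Set.univ 1 := by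
  have h : ∀ N : ℕ, 0 < N → countBelow Set.univ N / N = 1 := by
    intro N hN
    simp [countBelow, Set.indicator_apply, Finset.sum_const, div_self,
      Nat.cast_ne_zero, hN.ne']
  refine Tendsto.congr' ?_ (tendsto_const_nhds (x := (1:ℝ)))
  filter_upwards [eventually_gt_atTop 0] with N hN using (h N hN).symm

lemma hasDensity_diff {A B : Set ℕ} {a b : ℝ} (h : B ⊆ A)
    (hA : HasDensity A a) (hB : HasDensity B b) : HasDensity (A \ B) (a - b) := by
  have hd : Disjoint (A \ B) B := disjoint_sdiff_self_left
  have hu : (A \ B) ∪ B = A := Set.diff_union_of_subset h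
  have := hA.sub hB
  refine this.congr fun N => ?_
  have : countBelow A N = countBelow (A \ B) N + countBelow B N := by
    conv_lhs => rw [← hu]
    rw [countBelow_union hd]
  rw [this]; ring

lemma hasDensity_biUnion {ι : Type*} [DecidableEq ι] (s : Finset ι) (f : ι → Set ℕ) (d : ι → ℝ)
    (hdisj : ∀ i ∈ s, ∀ j ∈ s, i ≠ j → Disjoint (f i) (f j))
    (h : ∀ i ∈ s, HasDensity (f i) (d i)) :
    HasDensity (⋃ i ∈ s, f i) (∑ i ∈ s, d i) := by
  induction s using Finset.induction_on with
  | empty => simpa using hasDensity_empty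
  | @insert x s' hx ih =>
    rw [Finset.sum_insert hx]
    have : (⋃ i ∈ insert x s', f i) = f x ∪ ⋃ i ∈ s', f i := by
      simp [Set.biUnion_insert]
    rw [this]
    refine hasDensity_union ?_ (h x (Finset.mem_insert_self _ _))
      (ih (fun i hi j hj hij => hdisj i (Finset.mem_insert_of_mem hi) j
        (Finset.mem_insert_of_mem hj) hij)
        (fun i hi => h i (Finset.mem_insert_of_mem hi)))
    refine Set.disjoint_iUnion₂_right.mpr fun i hi => ?_
    exact hdisj x (Finset.mem_insert_self _ _) i (Finset.mem_insert_of_mem hi)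
      (fun hxi => hx (hxi ▸ hi))

lemma hasDensity_squeeze (S : Set ℕ) (dd : ℝ)
    (h : ∀ ε : ℝ, 0 < ε → ∃ A B : Set ℕ, ∃ a b : ℝ, A ⊆ S ∧ S ⊆ B ∧
      HasDensity A a ∧ HasDensity B b ∧ dd - ε ≤ a ∧ b ≤ dd + ε) :
    HasDensity S dd := by
  rw [HasDensity, Metric.tendsto_atTop]
  intro ε hε
  obtain ⟨A, B, a, b, hAS, hSB, hA, hB, ha, hb⟩ := h (ε/3) (by positivity)
  have h1 : ∀ᶠ N : ℕ in atTop, |countBelow A N / N - a| < ε/3 := by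
    have := Metric.tendsto_atTop.mp hA (ε/3) (by positivity)
    obtain ⟨n0, hn0⟩ := this
    filter_upwards [eventually_ge_atTop n0] with N hN
    simpa [Real.dist_eq] using hn0 N hN
  have h2 : ∀ᶠ N : ℕ in atTop, |countBelow B N / N - b| < ε/3 := by
    obtain ⟨n0, hn0⟩ := Metric.tendsto_atTop.mp hB (ε/3) (by positivity)
    filter_upwards [eventually_ge_atTop n0] with N hN
    simpa [Real.dist_eq] using hn0 N hN
  rw [← eventually_atTop]
  filter_upwards [h1, h2] with N hN1 hN2
  rw [Real.dist_eq, abs_sub_lt_iff]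
  have hle1 : countBelow A N / N ≤ countBelow S N / N := ratio_mono hAS N
  have hle2 : countBelow S N / N ≤ countBelow B N / N := ratio_mono hSB N
  rw [abs_sub_lt_iff] at hN1 hN2
  constructor <;> nlinarith [hN1.1, hN1.2, hN2.1, hN2.2]

lemma hasDensity_nonneg {A : Set ℕ} {a : ℝ} (hA : HasDensity A a) : 0 ≤ a := by
  simpa using hasDensity_mono (Set.empty_subset A) hasDensity_empty hA

lemma exists_right_cont {F : ℝ → ℝ} (hFc : Continuous F) (a ε : ℝ) (hε : 0 < ε) :
    ∃ a' : ℝ, a < a' ∧ F a' < F a + ε := by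
  have h := Metric.continuousAt_iff.mp (hFc.continuousAt (x := a)) ε hε
  obtain ⟨δ, hδ, hd⟩ := h
  refine ⟨a + δ/2, by linarith, ?_⟩
  have : dist (a + δ/2) a < δ := by
    rw [Real.dist_eq]; rw [abs_lt]; constructor <;> linarith
  have := hd this
  rw [Real.dist_eq, abs_lt] at this
  linarith [this.1, this.2]

/-- The density of `{n | v n ∈ Ioc a b}` is `F b - F a`. -/
lemma density_Ioc_eq {v : ℕ → ℝ} {F : ℝ → ℝ} (hF : HasADF v F) (hFc : Continuous F)
    (hFm : Monotone F) {a b d : ℝ} (hab : a ≤ b)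
    (hd : HasDensity {n | v n ∈ Set.Ioc a b} d) : d = F b - F a := by
  have hd0 : 0 ≤ d := hasDensity_nonneg hd
  have upper : ∀ ε : ℝ, 0 < ε → d ≤ F b - F a + ε := by
    intro ε hε
    obtain ⟨b', hb', hFb'⟩ := exists_right_cont hFc b ε hε
    have hsub : {n | v n ∈ Set.Ioc a b} ⊆ {n | v n < b'} \ {n | v n < a} := by
      intro n hn
      exact ⟨lt_of_le_of_lt hn.2 hb', not_lt.mpr (le_of_lt hn.1)⟩
    have hdiff : HasDensity ({n | v n < b'} \ {n | v n < a}) (F b' - F a) :=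
      hasDensity_diff (fun n hn => lt_of_lt_of_le hn (by linarith : a ≤ b')) (hF b') (hF a)
    have := hasDensity_mono hsub hd hdiff
    linarith
  have lower : ∀ ε : ℝ, 0 < ε → F b - F a - ε ≤ d := by
    intro ε hε
    obtain ⟨a', ha', hFa'⟩ := exists_right_cont hFc a ε hε
    by_cases hab' : a' ≤ b
    · have hsub : {n | v n < b} \ {n | v n < a'} ⊆ {n | v n ∈ Set.Ioc a b} := by
        intro n hn
        have h1 : v n < b := hn.1
        have h2 : a' ≤ v n := not_lt.mp hn.2
        exact ⟨lt_of_lt_of_le ha' h2, le_of_lt h1⟩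
      have hdiff : HasDensity ({n | v n < b} \ {n | v n < a'}) (F b - F a') :=
        hasDensity_diff (fun n hn => lt_of_lt_of_le hn hab') (hF b) (hF a')
      have := hasDensity_mono hsub hdiff hd
      linarith
    · have : F b ≤ F a' := hFm (le_of_not_ge hab')
      linarith
  have h1 : d ≤ F b - F a := by
    by_contra hcon
    push_neg at hcon
    have := upper ((d - (F b - F a))/2) (by linarith)
    linarith
  have h2 : F b - F a ≤ d := by
    by_contra hcon
    push_neg at hcon
    have := lower (((F b - F a) - d)/2) (by linarith)
    linarith
  linarith

lemma density_rect {v w : ℕ → ℝ} {F F₁ : ℝ → ℝ} (hF : HasADF v F) (hF₁ : HasADF w F₁)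
    (hFc : Continuous F) (hF₁c : Continuous F₁) (hFm : Monotone F) (hF₁m : Monotone F₁)
    (hind : IndepSeq v w) {a b c e : ℝ} (hab : a ≤ b) (hce : c ≤ e) :
    HasDensity ({n | v n ∈ Set.Ioc a b} ∩ {n | w n ∈ Set.Ioc c e})
      ((F b - F a) * (F₁ e - F₁ c)) := by
  obtain ⟨dS, dT, dST, h1, h2, h3, h4⟩ :=
    hind (Set.Ioc a b) (Set.Ioc c e) Set.ordConnected_Ioc Set.ordConnected_Ioc
  have e1 : dS = F b - F a := density_Ioc_eq hF hFc hFm hab h1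
  have e2 : dT = F₁ e - F₁ c := density_Ioc_eq hF₁ hF₁c hF₁m hce h2
  rw [← e1, ← e2, ← h4]
  exact h3

lemma stieltjes_coe_eq {F : ℝ → ℝ} (hFc : Continuous F) (hFm : Monotone F) :
    ⇑hFm.stieltjesFunction = F := by
  funext x
  rw [Monotone.stieltjesFunction_eq]
  exact hFm.continuousWithinAt_Ioi_iff_rightLim_eq.mp
    (hFc.continuousAt.continuousWithinAt)

lemma stieltjes_measure_Ioc {F : ℝ → ℝ} (hFc : Continuous F) (hFm : Monotone F) (a b : ℝ) :
    hFm.stieltjesFunction.measure (Set.Ioc a b) = ENNReal.ofReal (F b - F a) := by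
  rw [StieltjesFunction.measure_Ioc, stieltjes_coe_eq hFc hFm]

lemma stieltjes_measure_singleton {F : ℝ → ℝ} (hFc : Continuous F) (hFm : Monotone F) (a : ℝ) :
    hFm.stieltjesFunction.measure {a} = 0 := by
  rw [StieltjesFunction.measure_singleton, stieltjes_coe_eq hFc hFm]
  have : Function.leftLim F a = F a :=
    hFm.continuousWithinAt_Iio_iff_leftLim_eq.mp (hFc.continuousAt.continuousWithinAt)
  simp [this]

lemma stieltjes_measure_univ {F : ℝ → ℝ} (hFc : Continuous F) (hFm : Monotone F) (C : ℝ)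
    (h0 : ∀ t ≤ -C, F t = 0) (h1 : ∀ t, C < t → F t = 1) :
    hFm.stieltjesFunction.measure Set.univ = 1 := by
  have hbot : Tendsto F atBot (𝓝 0) := by
    refine Tendsto.congr' ?_ (tendsto_const_nhds (x := (0:ℝ)))
    filter_upwards [eventually_le_atBot (-C)] with t ht using (h0 t ht).symm
  have htop : Tendsto F atTop (𝓝 1) := by
    refine Tendsto.congr' ?_ (tendsto_const_nhds (x := (1:ℝ)))
    filter_upwards [eventually_gt_atTop C] with t ht using (h1 t ht).symm
  have hb : Tendsto (⇑hFm.stieltjesFunction) atBot (𝓝 0) := by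
    rw [stieltjes_coe_eq hFc hFm]; exact hbot
  have ht : Tendsto (⇑hFm.stieltjesFunction) atTop (𝓝 1) := by
    rw [stieltjes_coe_eq hFc hFm]; exact htop
  rw [StieltjesFunction.measure_univ _ hb ht]
  norm_num

lemma measSum_meas (y : ℝ) : MeasurableSet {p : ℝ × ℝ | p.1 + p.2 ≤ y} :=
  measurableSet_le (measurable_fst.add measurable_snd) measurable_const

lemma tendsto_div_nat (c : ℝ) : Tendsto (fun k : ℕ => c / (k + 1)) atTop (𝓝 0) := by
  apply Tendsto.div_atTop (tendsto_const_nhds (x := c))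
  exact tendsto_atTop_add_const_right atTop 1 tendsto_natCast_atTop_atTop

lemma stepA (ν : Measure (ℝ × ℝ)) [IsFiniteMeasure ν] (x ε : ℝ) (hε : 0 < ε)
    (hdiag : ν {p : ℝ × ℝ | p.1 + p.2 = x} = 0) :
    ∃ δ : ℝ, 0 < δ ∧
      (ν {p : ℝ × ℝ | p.1 + p.2 ≤ x + 2*δ}).toReal ≤ (ν {p : ℝ × ℝ | p.1 + p.2 ≤ x}).toReal + ε ∧
      (ν {p : ℝ × ℝ | p.1 + p.2 ≤ x}).toReal - ε ≤
        (ν {p : ℝ × ℝ | p.1 + p.2 ≤ x - 3*δ}).toReal := by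
  set m : ℝ → ℝ≥0∞ := fun y => ν {p : ℝ × ℝ | p.1 + p.2 ≤ y} with hm
  have hmono : ∀ y y' : ℝ, y ≤ y' → m y ≤ m y' := fun y y' h =>
    measure_mono (fun p hp => le_trans hp h)
  -- upper continuity
  have hup : Tendsto (fun k : ℕ => (m (x + 2/(k+1))).toReal) atTop (𝓝 ((m x).toReal)) := by
    have hanti : Antitone (fun k : ℕ => {p : ℝ × ℝ | p.1 + p.2 ≤ x + 2/(k+1)}) := by
      intro k k' hk p hp
      simp only [Set.mem_setOf_eq] at hp ⊢
      have hd : 2/((k':ℝ)+1) ≤ 2/((k:ℝ)+1) := by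
        apply div_le_div_of_nonneg_left (by norm_num) (by positivity)
        push_cast; exact_mod_cast Nat.succ_le_succ hk
      linarith
    have hiInter : (⋂ k : ℕ, {p : ℝ × ℝ | p.1 + p.2 ≤ x + 2/(k+1)}) =
        {p : ℝ × ℝ | p.1 + p.2 ≤ x} := by
      ext p
      simp only [Set.mem_iInter, Set.mem_setOf_eq]
      constructor
      · intro h
        have ht : Tendsto (fun k : ℕ => x + 2/(k+1)) atTop (𝓝 x) := by
          simpa using (tendsto_const_nhds (x := x)).add (tendsto_div_nat 2)
        exact ge_of_tendsto ht (Eventually.of_forall h)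
      · intro h k
        have : (0:ℝ) ≤ 2/(k+1) := by positivity
        linarith
    have h1 : Tendsto (fun k : ℕ => m (x + 2/(k+1))) atTop (𝓝 (m x)) := by
      have := tendsto_measure_iInter_atTop (μ := ν)
        (s := fun k : ℕ => {p : ℝ × ℝ | p.1 + p.2 ≤ x + 2/(k+1)})
        (fun k => (measSum_meas _).nullMeasurableSet) hanti ⟨0, measure_ne_top ν _⟩
      rwa [hiInter] at this
    exact (ENNReal.tendsto_toReal (measure_ne_top ν _)).comp h1
  -- lower continuity
  have hlow : Tendsto (fun k : ℕ => (m (x - 3/(k+1))).toReal) atTop (𝓝 ((m x).toReal)) := by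
    have hmon : Monotone (fun k : ℕ => {p : ℝ × ℝ | p.1 + p.2 ≤ x - 3/(k+1)}) := by
      intro k k' hk p hp
      simp only [Set.mem_setOf_eq] at hp ⊢
      have hd : 3/((k':ℝ)+1) ≤ 3/((k:ℝ)+1) := by
        apply div_le_div_of_nonneg_left (by norm_num) (by positivity)
        push_cast; exact_mod_cast Nat.succ_le_succ hk
      linarith
    have hiUnion : (⋃ k : ℕ, {p : ℝ × ℝ | p.1 + p.2 ≤ x - 3/(k+1)}) =
        {p : ℝ × ℝ | p.1 + p.2 < x} := by
      ext p
      simp only [Set.mem_iUnion, Set.mem_setOf_eq]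
      constructor
      · rintro ⟨k, hk⟩
        have : (0:ℝ) < 3/(k+1) := by positivity
        linarith
      · intro h
        obtain ⟨k, hk⟩ := exists_nat_gt (3 / (x - p.1 - p.2))
        refine ⟨k, ?_⟩
        have hx : 0 < x - p.1 - p.2 := by linarith
        have h3 : 3 / (x - p.1 - p.2) < k + 1 := by linarith
        have : 3 / ((k:ℝ)+1) < x - p.1 - p.2 := by
          rw [div_lt_iff₀ (by positivity)] at h3 ⊢
          · nlinarith
        linarith
    have hlt : ν {p : ℝ × ℝ | p.1 + p.2 < x} = ν {p : ℝ × ℝ | p.1 + p.2 ≤ x} := by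
      have hsub2 : {p : ℝ × ℝ | p.1 + p.2 < x} ⊆ {p : ℝ × ℝ | p.1 + p.2 ≤ x} :=
        by intro p hp; simp only [Set.mem_setOf_eq] at hp ⊢; exact le_of_lt hp
      apply le_antisymm
      · exact measure_mono hsub2
      have hsub : {p : ℝ × ℝ | p.1 + p.2 ≤ x} ⊆
          {p : ℝ × ℝ | p.1 + p.2 < x} ∪ {p : ℝ × ℝ | p.1 + p.2 = x} := by
        intro p hp
        simp only [Set.mem_setOf_eq] at hp
        simp only [Set.mem_union, Set.mem_setOf_eq]
        exact lt_or_eq_of_le hp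
      calc ν {p : ℝ × ℝ | p.1 + p.2 ≤ x} ≤ ν ({p : ℝ × ℝ | p.1 + p.2 < x} ∪ {p : ℝ × ℝ | p.1 + p.2 = x}) :=
            measure_mono hsub
        _ ≤ ν {p : ℝ × ℝ | p.1 + p.2 < x} + ν {p : ℝ × ℝ | p.1 + p.2 = x} := measure_union_le _ _
        _ = ν {p : ℝ × ℝ | p.1 + p.2 < x} := by rw [hdiag, add_zero]
    have h1 : Tendsto (fun k : ℕ => m (x - 3/(k+1))) atTop (𝓝 (m x)) := by
      have := tendsto_measure_iUnion_atTop (μ := ν)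
        (s := fun k : ℕ => {p : ℝ × ℝ | p.1 + p.2 ≤ x - 3/(k+1)}) hmon
      rwa [hiUnion, hlt] at this
    exact (ENNReal.tendsto_toReal (measure_ne_top ν _)).comp h1
  obtain ⟨k₁, hk₁⟩ := Metric.tendsto_atTop.mp hup ε hε
  obtain ⟨k₂, hk₂⟩ := Metric.tendsto_atTop.mp hlow ε hε
  have h1 := hk₁ k₁ le_rfl
  have h2 := hk₂ k₂ le_rfl
  rw [Real.dist_eq, abs_sub_lt_iff] at h1 h2
  have hmin1 : min (1/((k₁:ℝ)+1)) (1/((k₂:ℝ)+1)) ≤ 1/((k₁:ℝ)+1) := min_le_left _ _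
  have hmin2 : min (1/((k₁:ℝ)+1)) (1/((k₂:ℝ)+1)) ≤ 1/((k₂:ℝ)+1) := min_le_right _ _
  refine ⟨min (1/((k₁:ℝ)+1)) (1/((k₂:ℝ)+1)), by positivity, ?_, ?_⟩
  · have hle : x + 2 * min (1/((k₁:ℝ)+1)) (1/((k₂:ℝ)+1)) ≤ x + 2/((k₁:ℝ)+1) := by
      rw [div_eq_mul_inv (2:ℝ), ← one_div]
      nlinarith
    have := ENNReal.toReal_mono (measure_ne_top ν _) (hmono _ _ hle)
    linarith [h1.1]
  · have hle : x - 3/((k₂:ℝ)+1) ≤ x - 3 * min (1/((k₁:ℝ)+1)) (1/((k₂:ℝ)+1)) := by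
      rw [div_eq_mul_inv (3:ℝ), ← one_div]
      nlinarith
    have := ENNReal.toReal_mono (measure_ne_top ν _) (hmono _ _ hle)
    linarith [h2.2]

lemma grid_cover (a : ℕ → ℝ) : ∀ K : ℕ, ∀ t : ℝ, a 0 < t → t ≤ a K →
    ∃ i, i < K ∧ a i < t ∧ t ≤ a (i+1) := by
  intro K
  induction K with
  | zero => exact fun t h1 h2 => absurd (lt_of_lt_of_le h1 h2) (lt_irrefl _)
  | succ K ih =>
    intro t h1 h2
    by_cases h : a K < t
    · exact ⟨K, Nat.lt_succ_self K, h, h2⟩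
    · obtain ⟨i, hi, h3, h4⟩ := ih t h1 (not_lt.mp h)
      exact ⟨i, Nat.lt_succ_of_lt hi, h3, h4⟩

theorem adf_of_sum_of_indep (v w : ℕ → ℝ) (C : ℝ)
    (hv : ∀ n, |v n| ≤ C) (hw : ∀ n, |w n| ≤ C) (F F₁ : ℝ → ℝ)
    (hF : HasADF v F) (hF₁ : HasADF w F₁) (hFc : Continuous F) (hF₁c : Continuous F₁)
    (hFm : Monotone F) (hF₁m : Monotone F₁) (hind : IndepSeq v w) :
    HasADF (fun n => v n + w n) (fun x =>
      ((hFm.stieltjesFunction.measure.prod hF₁m.stieltjesFunction.measure)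
        {p : ℝ × ℝ | p.1 + p.2 ≤ x}).toReal) := by
  classical
  intro x
  have hC0 : 0 ≤ C := le_trans (abs_nonneg _) (hv 0)
  have hvlb : ∀ n, -C ≤ v n := fun n => (abs_le.mp (hv n)).1
  have hvub : ∀ n, v n ≤ C := fun n => (abs_le.mp (hv n)).2
  have hwlb : ∀ n, -C ≤ w n := fun n => (abs_le.mp (hw n)).1
  have hwub : ∀ n, w n ≤ C := fun n => (abs_le.mp (hw n)).2
  have hF0 : ∀ t ≤ -C, F t = 0 := by
    intro t ht
    have hset : {n | v n < t} = (∅ : Set ℕ) := by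
      ext n
      simp only [Set.mem_setOf_eq, Set.mem_empty_iff_false, iff_false, not_lt]
      exact le_trans ht (hvlb n)
    have := hF t
    rw [hset] at this
    exact tendsto_nhds_unique this hasDensity_empty
  have hF1 : ∀ t, C < t → F t = 1 := by
    intro t ht
    have hset : {n | v n < t} = (Set.univ : Set ℕ) := by
      ext n
      simp only [Set.mem_setOf_eq, Set.mem_univ, iff_true]
      exact lt_of_le_of_lt (hvub n) ht
    have := hF t
    rw [hset] at this
    exact tendsto_nhds_unique this hasDensity_univ
  have hF₁0 : ∀ t ≤ -C, F₁ t = 0 := by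
    intro t ht
    have hset : {n | w n < t} = (∅ : Set ℕ) := by
      ext n
      simp only [Set.mem_setOf_eq, Set.mem_empty_iff_false, iff_false, not_lt]
      exact le_trans ht (hwlb n)
    have := hF₁ t
    rw [hset] at this
    exact tendsto_nhds_unique this hasDensity_empty
  have hF₁1 : ∀ t, C < t → F₁ t = 1 := by
    intro t ht
    have hset : {n | w n < t} = (Set.univ : Set ℕ) := by
      ext n
      simp only [Set.mem_setOf_eq, Set.mem_univ, iff_true]
      exact lt_of_le_of_lt (hwub n) ht
    have := hF₁ t
    rw [hset] at this
    exact tendsto_nhds_unique this hasDensity_univ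
  set μ := hFm.stieltjesFunction.measure with hμdef
  set μ₁ := hF₁m.stieltjesFunction.measure with hμ₁def
  haveI : IsProbabilityMeasure μ := ⟨stieltjes_measure_univ hFc hFm C hF0 hF1⟩
  haveI : IsProbabilityMeasure μ₁ := ⟨stieltjes_measure_univ hF₁c hF₁m C hF₁0 hF₁1⟩
  haveI : IsProbabilityMeasure (μ.prod μ₁) := by infer_instance
  have hdiag : (μ.prod μ₁) {p : ℝ × ℝ | p.1 + p.2 = x} = 0 := by
    have hms : MeasurableSet {p : ℝ × ℝ | p.1 + p.2 = x} :=
      measurableSet_eq_fun (measurable_fst.add measurable_snd) measurable_const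
    rw [Measure.prod_apply hms]
    have hz : ∀ t : ℝ, μ₁ (Prod.mk t ⁻¹' {p : ℝ × ℝ | p.1 + p.2 = x}) = 0 := by
      intro t
      have hpre : Prod.mk t ⁻¹' {p : ℝ × ℝ | p.1 + p.2 = x} = {x - t} := by
        ext s
        simp only [Set.mem_preimage, Set.mem_setOf_eq, Set.mem_singleton_iff]
        constructor <;> intro h <;> linarith
      rw [hpre]
      exact stieltjes_measure_singleton hF₁c hF₁m _
    simp only [hz, lintegral_const, zero_mul]
  apply hasDensity_squeeze
  intro ε hε
  obtain ⟨δ, hδ, hupb, hlob⟩ := stepA (μ.prod μ₁) x ε hε hdiag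
  obtain ⟨K₀, hK₀⟩ := exists_nat_gt ((2*C+2)/δ)
  set K := K₀ + 1 with hKdef
  have hKpos : (0:ℝ) < K := by positivity
  set st := (2*C+2)/(K:ℝ) with hstdef
  have hC2 : (0:ℝ) < 2*C+2 := by linarith
  have hstpos : 0 < st := by positivity
  have hstδ : st ≤ δ := by
    rw [hstdef, div_le_iff₀ hKpos]
    have h1 : (2*C+2)/δ < (K:ℝ) := by
      have : (K₀:ℝ) ≤ (K:ℝ) := by exact_mod_cast Nat.le_succ K₀
      linarith
    rw [div_lt_iff₀ hδ] at h1
    nlinarith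
  set a : ℕ → ℝ := fun i => -(C+1) + i*st with hadef
  have ha_succ : ∀ i : ℕ, a (i+1) = a i + st := by
    intro i
    simp only [hadef]
    push_cast
    ring
  have ha_mono : Monotone a := by
    intro i j hij
    simp only [hadef]
    have : (i:ℝ) ≤ (j:ℝ) := by exact_mod_cast hij
    nlinarith
  have ha0 : a 0 = -(C+1) := by simp [hadef]
  have haK : a K = C+1 := by
    simp only [hadef, hstdef]
    field_simp
    ring
  have haa : ∀ i : ℕ, a i ≤ a (i+1) := fun i => by rw [ha_succ]; linarith
  have hFa0 : F (a 0) = 0 := hF0 _ (by rw [ha0]; linarith)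
  have hFaK : F (a K) = 1 := hF1 _ (by rw [haK]; linarith)
  have hF₁a0 : F₁ (a 0) = 0 := hF₁0 _ (by rw [ha0]; linarith)
  have hF₁aK : F₁ (a K) = 1 := hF₁1 _ (by rw [haK]; linarith)
  set R : ℕ × ℕ → Set ℕ := fun p =>
    {n | v n ∈ Set.Ioc (a p.1) (a (p.1+1))} ∩ {n | w n ∈ Set.Ioc (a p.2) (a (p.2+1))} with hRdef
  set rect : ℕ × ℕ → Set (ℝ × ℝ) := fun p =>
    Set.Ioc (a p.1) (a (p.1+1)) ×ˢ Set.Ioc (a p.2) (a (p.2+1)) with hrectdef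
  have hIoc_disj : ∀ i j : ℕ, i ≠ j →
      Disjoint (Set.Ioc (a i) (a (i+1))) (Set.Ioc (a j) (a (j+1))) := by
    intro i j hij
    rcases lt_or_gt_of_ne hij with h | h
    · exact Set.Ioc_disjoint_Ioc.mpr (le_trans (min_le_left _ _)
        (le_trans (ha_mono (Nat.succ_le_of_lt h)) (le_max_right _ _)))
    · exact Set.Ioc_disjoint_Ioc.mpr (le_trans (min_le_right _ _)
        (le_trans (ha_mono (Nat.succ_le_of_lt h)) (le_max_left _ _)))
  have hR_disj : ∀ p q : ℕ × ℕ, p ≠ q → Disjoint (R p) (R q) := by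
    intro p q hpq
    rw [Set.disjoint_left]
    intro n hp hq
    by_cases h1 : p.1 = q.1
    · have h2 : p.2 ≠ q.2 := fun h2 => hpq (Prod.ext h1 h2)
      exact Set.disjoint_left.mp (hIoc_disj _ _ h2) hp.2 hq.2
    · exact Set.disjoint_left.mp (hIoc_disj _ _ h1) hp.1 hq.1
  have hrect_disj : ∀ p q : ℕ × ℕ, p ≠ q → Disjoint (rect p) (rect q) := by
    intro p q hpq
    rw [Set.disjoint_left]
    intro z hp hq
    by_cases h1 : p.1 = q.1
    · have h2 : p.2 ≠ q.2 := fun h2 => hpq (Prod.ext h1 h2)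
      exact Set.disjoint_left.mp (hIoc_disj _ _ h2) hp.2 hq.2
    · exact Set.disjoint_left.mp (hIoc_disj _ _ h1) hp.1 hq.1
  have hdens : ∀ p : ℕ × ℕ, HasDensity (R p)
      ((F (a (p.1+1)) - F (a p.1)) * (F₁ (a (p.2+1)) - F₁ (a p.2))) := fun p =>
    density_rect hF hF₁ hFc hF₁c hFm hF₁m hind (haa _) (haa _)
  have hμrect : ∀ p : ℕ × ℕ, (μ.prod μ₁) (rect p) =
      ENNReal.ofReal ((F (a (p.1+1)) - F (a p.1)) * (F₁ (a (p.2+1)) - F₁ (a p.2))) := by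
    intro p
    rw [hrectdef]
    simp only []
    rw [Measure.prod_prod, stieltjes_measure_Ioc hFc hFm, stieltjes_measure_Ioc hF₁c hF₁m,
      ← ENNReal.ofReal_mul (sub_nonneg.mpr (hFm (haa _)))]
  have hkey : ∀ P : Finset (ℕ × ℕ), HasDensity (⋃ p ∈ P, R p)
      (((μ.prod μ₁) (⋃ p ∈ P, rect p)).toReal) := by
    intro P
    have h1 := hasDensity_biUnion P R
      (fun p => (F (a (p.1+1)) - F (a p.1)) * (F₁ (a (p.2+1)) - F₁ (a p.2)))
      (fun p _ q _ hpq => hR_disj p q hpq) (fun p _ => hdens p)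
    have h2 : (μ.prod μ₁) (⋃ p ∈ P, rect p) = ∑ p ∈ P, (μ.prod μ₁) (rect p) :=
      measure_biUnion_finset (fun p _ q _ hpq => hrect_disj p q hpq)
        (fun p _ => measurableSet_Ioc.prod measurableSet_Ioc)
    rw [h2, ENNReal.toReal_sum (fun p _ => measure_ne_top _ _)]
    have h4 : ∀ p ∈ P, ((μ.prod μ₁) (rect p)).toReal =
        (F (a (p.1+1)) - F (a p.1)) * (F₁ (a (p.2+1)) - F₁ (a p.2)) := by
      intro p _
      rw [hμrect p, ENNReal.toReal_ofReal (mul_nonneg (sub_nonneg.mpr (hFm (haa _)))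
        (sub_nonneg.mpr (hF₁m (haa _))))]
    rw [Finset.sum_congr rfl h4]
    exact h1
  set Plo := (Finset.range K ×ˢ Finset.range K).filter
    (fun p => a (p.1+1) + a (p.2+1) < x) with hPlodef
  set Phi := (Finset.range K ×ˢ Finset.range K).filter
    (fun p => a p.1 + a p.2 < x) with hPhidef
  refine ⟨⋃ p ∈ Plo, R p, ⋃ p ∈ Phi, R p,
    ((μ.prod μ₁) (⋃ p ∈ Plo, rect p)).toReal, ((μ.prod μ₁) (⋃ p ∈ Phi, rect p)).toReal,
    ?_, ?_, hkey Plo, hkey Phi, ?_, ?_⟩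
  · -- lower union ⊆ S
    intro n hn
    simp only [Set.mem_iUnion] at hn
    obtain ⟨p, hp, hnp⟩ := hn
    have hcond : a (p.1+1) + a (p.2+1) < x := (Finset.mem_filter.mp hp).2
    have h1 : v n ≤ a (p.1+1) := hnp.1.2
    have h2 : w n ≤ a (p.2+1) := hnp.2.2
    simp only [Set.mem_setOf_eq]
    linarith
  · -- S ⊆ upper union
    intro n hn
    simp only [Set.mem_setOf_eq] at hn
    obtain ⟨i, hi, hvi⟩ := by
      refine grid_cover a K (v n) ?_ ?_
      · rw [ha0]; linarith [hvlb n]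
      · rw [haK]; linarith [hvub n]
    obtain ⟨j, hj, hwj⟩ := by
      refine grid_cover a K (w n) ?_ ?_
      · rw [ha0]; linarith [hwlb n]
      · rw [haK]; linarith [hwub n]
    simp only [Set.mem_iUnion]
    refine ⟨(i, j), ?_, ⟨hvi, hwj⟩⟩
    rw [hPhidef, Finset.mem_filter, Finset.mem_product]
    refine ⟨⟨Finset.mem_range.mpr hi, Finset.mem_range.mpr hj⟩, ?_⟩
    have : a i < v n := hvi.1
    have : a j < w n := hwj.1
    simp only []
    linarith [hvi.1, hwj.1]
  · -- lower bound
    have hbox : (μ.prod μ₁) ((Set.Ioc (a 0) (a K) ×ˢ Set.Ioc (a 0) (a K))ᶜ) = 0 := by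
      have hmb : (μ.prod μ₁) (Set.Ioc (a 0) (a K) ×ˢ Set.Ioc (a 0) (a K)) = 1 := by
        rw [Measure.prod_prod, stieltjes_measure_Ioc hFc hFm, stieltjes_measure_Ioc hF₁c hF₁m,
          hFa0, hFaK, hF₁a0, hF₁aK]
        norm_num
      rw [measure_compl (measurableSet_Ioc.prod measurableSet_Ioc) (measure_ne_top _ _), hmb,
        measure_univ, tsub_self]
    have hsub : {p : ℝ × ℝ | p.1 + p.2 ≤ x - 3*δ} ⊆
        (⋃ p ∈ Plo, rect p) ∪ (Set.Ioc (a 0) (a K) ×ˢ Set.Ioc (a 0) (a K))ᶜ := by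
      intro z hz
      by_cases hzb : z ∈ Set.Ioc (a 0) (a K) ×ˢ Set.Ioc (a 0) (a K)
      · left
        simp only [Set.mem_setOf_eq] at hz
        obtain ⟨hz1, hz2⟩ := hzb
        obtain ⟨i, hi, hzi⟩ := grid_cover a K z.1 hz1.1 hz1.2
        obtain ⟨j, hj, hzj⟩ := grid_cover a K z.2 hz2.1 hz2.2
        simp only [Set.mem_iUnion]
        refine ⟨(i, j), ?_, ⟨hzi, hzj⟩⟩
        rw [hPlodef, Finset.mem_filter, Finset.mem_product]
        refine ⟨⟨Finset.mem_range.mpr hi, Finset.mem_range.mpr hj⟩, ?_⟩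
        have h1 : a (i+1) ≤ z.1 + st := by rw [ha_succ]; linarith [hzi.1]
        have h2 : a (j+1) ≤ z.2 + st := by rw [ha_succ]; linarith [hzj.1]
        simp only []
        linarith
      · right; exact hzb
    have hch : (μ.prod μ₁) {p : ℝ × ℝ | p.1 + p.2 ≤ x - 3*δ} ≤
        (μ.prod μ₁) (⋃ p ∈ Plo, rect p) :=
      calc (μ.prod μ₁) {p : ℝ × ℝ | p.1 + p.2 ≤ x - 3*δ}
          ≤ (μ.prod μ₁) ((⋃ p ∈ Plo, rect p) ∪
              (Set.Ioc (a 0) (a K) ×ˢ Set.Ioc (a 0) (a K))ᶜ) := measure_mono hsub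
        _ ≤ (μ.prod μ₁) (⋃ p ∈ Plo, rect p) +
              (μ.prod μ₁) ((Set.Ioc (a 0) (a K) ×ˢ Set.Ioc (a 0) (a K))ᶜ) := measure_union_le _ _
        _ = (μ.prod μ₁) (⋃ p ∈ Plo, rect p) := by rw [hbox, add_zero]
    have := ENNReal.toReal_mono (measure_ne_top _ _) hch
    linarith
  · -- upper bound
    have hsub : (⋃ p ∈ Phi, rect p) ⊆ {p : ℝ × ℝ | p.1 + p.2 ≤ x + 2*δ} := by
      intro z hz
      simp only [Set.mem_iUnion] at hz
      obtain ⟨p, hp, hzp⟩ := hz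
      have hcond : a p.1 + a p.2 < x := (Finset.mem_filter.mp hp).2
      have h1 : z.1 ≤ a (p.1+1) := hzp.1.2
      have h2 : z.2 ≤ a (p.2+1) := hzp.2.2
      have h3 : a (p.1+1) = a p.1 + st := ha_succ _
      have h4 : a (p.2+1) = a p.2 + st := ha_succ _
      simp only [Set.mem_setOf_eq]
      linarith
    have := ENNReal.toReal_mono (measure_ne_top (μ.prod μ₁) _)
      (measure_mono (μ := μ.prod μ₁) hsub)
    linarith
end
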